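/- Let A be the 3-order 2-dimensional tensor with entries a_{111} = 1, a_{122} = -1, a_{211} = 2, a_{222} = -1 and all other entries zero, so that for x ∈ ℝ²_+, A x² = (x₁² - x₂², 2x₁² - x₂²). Then A is not an R-tensor: there exist x ∈ ℝ²_+, x ≠ 0, and t ≥ 0 such that (A x²)_i + t = 0 whenever x_i > 0 and (A x²)_i + t ≥ 0 whenever x_i = 0. (For example, x = (0, a) with a > 0 and t = a².) -/
import Mathlib


open Finset

/-- `(A x^{m-1})_i` for an `m`-order `n`-dimensional tensor, where `k = m - 1`:
entries are indexed by a leading index `i` and `k` trailing indices. -/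
def tmap {n k : ℕ} (A : Fin n → (Fin k → Fin n) → ℝ) (x : Fin n → ℝ) : Fin n → ℝ :=
  fun i => ∑ f : Fin k → Fin n, A i f * ∏ j, x (f j)

def SemiPositive {n k : ℕ} (A : Fin n → (Fin k → Fin n) → ℝ) : Prop :=
  ∀ x : Fin n → ℝ, (∀ i, 0 ≤ x i) → x ≠ 0 → ∃ i, 0 < x i ∧ 0 ≤ tmap A x i

def StrictlySemiPositive {n k : ℕ} (A : Fin n → (Fin k → Fin n) → ℝ) : Prop :=
  ∀ x : Fin n → ℝ, (∀ i, 0 ≤ x i) → x ≠ 0 → ∃ i, 0 < x i ∧ 0 < tmap A x i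

def WeakPTensor {n k : ℕ} (A : Fin n → (Fin k → Fin n) → ℝ) : Prop :=
  ∀ x : Fin n → ℝ, x ≠ 0 → ∃ i, (x i) ^ k * tmap A x i > 0

def ERTensor {n k : ℕ} (A : Fin n → (Fin k → Fin n) → ℝ) : Prop :=
  ¬ ∃ (x : Fin n → ℝ) (t : ℝ), (∀ i, 0 ≤ x i) ∧ x ≠ 0 ∧ 0 ≤ t ∧
    (∀ i, 0 < x i → tmap A x i + t * x i = 0) ∧
    (∀ i, x i = 0 → 0 ≤ tmap A x i)

def RTensor {n k : ℕ} (A : Fin n → (Fin k → Fin n) → ℝ) : Prop :=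
  ¬ ∃ (x : Fin n → ℝ) (t : ℝ), (∀ i, 0 ≤ x i) ∧ x ≠ 0 ∧ 0 ≤ t ∧
    (∀ i, 0 < x i → tmap A x i + t = 0) ∧
    (∀ i, x i = 0 → 0 ≤ tmap A x i + t)

def R0Tensor {n k : ℕ} (A : Fin n → (Fin k → Fin n) → ℝ) : Prop :=
  ¬ ∃ x : Fin n → ℝ, (∀ i, 0 ≤ x i) ∧ x ≠ 0 ∧
    (∀ i, 0 < x i → tmap A x i = 0) ∧
    (∀ i, x i = 0 → 0 ≤ tmap A x i)

/-- The tensor of Example 3.2: a_{111} = 1, a_{122} = -1, a_{211} = 2, a_{222} = -1. -/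
def exB : Fin 2 → (Fin 2 → Fin 2) → ℝ := fun i f =>
  if i = 0 ∧ f 0 = 0 ∧ f 1 = 0 then 1
  else if i = 0 ∧ f 0 = 1 ∧ f 1 = 1 then -1
  else if i = 1 ∧ f 0 = 0 ∧ f 1 = 0 then 2
  else if i = 1 ∧ f 0 = 1 ∧ f 1 = 1 then -1
  else 0

lemma tmap_exB (i : Fin 2) : tmap exB ![0,1] i = -1 := by
  rw [tmap, ← (piFinTwoEquiv (fun _ => Fin 2)).symm.sum_comp]
  fin_cases i <;>
    simp [Fintype.sum_prod_type, Fin.sum_univ_two, Fin.prod_univ_two, exB, piFinTwoEquiv]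

theorem stmt10 : ¬ RTensor exB := by
  intro h
  apply h
  refine ⟨![0,1], 1, ?_, ?_, by norm_num, ?_, ?_⟩
  · intro i; fin_cases i <;> norm_num
  · intro hx
    have := congrFun hx 1
    simp at this
  · intro i _; rw [tmap_exB]; ring
  · intro i _; rw [tmap_exB]; norm_num
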